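/- arXiv:1609.07800 — 8 statements merged into one kernel-verified Lean document; each statement's English description precedes it below -/
import Mathlib

section
/- Let γ(t) = (at+b)/(ct+d) be a Möbius transformation over a valued field K with ad−bc ≠ 0, let p ∈ K and δ a nonzero radius, and assume |cp+d| > δ·|c| (i.e., ∞ ∉ γ(B(p,δ)), equivalently the pole of γ is not in B(p,δ)). Then for all q ∈ B(p,δ) with cq+d ≠ 0: |γ(p) − γ(q)| = |γ'(p)|·|p−q|, where γ'(p) = (bc−ad)/(cp+d)². -/
theorem stmt_4 {K Γ₀ : Type*} [Field K] [LinearOrderedCommGroupWithZero Γ₀]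
    (v : Valuation K Γ₀) (a b c d p : K) (δ : Γ₀) (hδ : δ ≠ 0)
    (hdet : a * d - b * c ≠ 0)
    (hpole : δ * v c < v (c * p + d))
    (q : K) (hq : v (q - p) ≤ δ) (hq2 : c * q + d ≠ 0) :
    v ((a * p + b) / (c * p + d) - (a * q + b) / (c * q + d)) =
      v ((b * c - a * d) / (c * p + d) ^ 2) * v (p - q) := by
  have hp2 : c * p + d ≠ 0 := by
    intro h
    rw [h, v.map_zero] at hpole
    exact absurd hpole (by simp)
  have hvq : v (c * q + d) = v (c * p + d) := by
    have h1 : v (c * (q - p)) < v (c * p + d) := by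
      rw [v.map_mul]
      calc v c * v (q - p) ≤ v c * δ := mul_le_mul_right hq _
        _ = δ * v c := mul_comm _ _
        _ < v (c * p + d) := hpole
    rw [show c * q + d = c * p + d + c * (q - p) by ring]
    exact v.map_add_eq_of_lt_left h1
  have key : (a * p + b) / (c * p + d) - (a * q + b) / (c * q + d)
      = (b * c - a * d) / (c * p + d) ^ 2 * (q - p) * ((c * p + d) / (c * q + d)) := by
    rw [div_sub_div _ _ hp2 hq2]
    field_simp
    ring
  have h1 : v ((c * p + d) / (c * q + d)) = 1 := by
    rw [v.map_div, hvq, div_self]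
    simpa using hp2
  have h2 : v (q - p) = v (p - q) := v.map_sub_swap q p
  rw [key, v.map_mul, v.map_mul, h1, h2, mul_one]
end

section
/- Let γ(t) = (at+b)/(ct+d) with ad−bc ≠ 0 over a valued field K, p ∈ K, and δ a nonzero radius with |cp+d| > δ·|c|. Then γ maps the closed ball B(p,δ) bijectively onto the closed ball B(γ(p), |γ'(p)|·δ). -/
/-!
On the ball, the ultrametric inequality forces `|ct + d| = |cp + d|`, so the identity
`γ t - γ s = (ad - bc)(t - s) / ((ct + d)(cs + d))` shows that `γ` multiplies all distances by
exactly `|γ'(p)|`; this gives both the inclusion of the image and injectivity. Surjectivity comes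
from the same argument applied to the inverse Möbius map `y ↦ (dy - b)/(-cy + a)` on the target
ball: its pole condition is the original one scaled by `|γ'(p)|`, and it scales distances by
`|γ'(p)|⁻¹`.
-/

open Set

section Mobius

variable {K : Type*} [Field K]

def mobius (a b c d t : K) : K := (a * t + b) / (c * t + d)

theorem mobius_sub_mobius {a b c d t s : K} (ht : c * t + d ≠ 0) (hs : c * s + d ≠ 0) :
    mobius a b c d t - mobius a b c d s
      = (a * d - b * c) * (t - s) / ((c * t + d) * (c * s + d)) := by
  rw [mobius, mobius, div_sub_div _ _ ht hs]
  ring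

theorem neg_mul_mobius_add {a b c d p : K} (hp : c * p + d ≠ 0) :
    -c * mobius a b c d p + a = (a * d - b * c) / (c * p + d) := by
  rw [mobius]
  field_simp
  ring

theorem mobius_mobius_inv {a b c d y : K} (hdet : a * d - b * c ≠ 0) (hy : -c * y + a ≠ 0) :
    mobius a b c d (mobius d (-b) (-c) a y) = y := by
  have hden : c * mobius d (-b) (-c) a y + d = (a * d - b * c) / (-c * y + a) := by
    rw [mobius, mul_div_assoc', div_add' _ _ _ hy]
    congr 1
    ring
  rw [mobius, hden, mobius, mul_div_assoc', div_add' _ _ _ hy, div_div_div_cancel_right₀ hy,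
    div_eq_iff hdet]
  ring

end Mobius

section Valued

variable {K Γ₀ : Type*} [Field K] [LinearOrderedCommGroupWithZero Γ₀] (v : Valuation K Γ₀)

def valBall (p : K) (δ : Γ₀) : Set K := {y | v (y - p) ≤ δ}

variable {v} {a b c d p : K} {δ : Γ₀}

theorem valuation_mul_add_eq_of_mem_valBall (hpole : δ * v c < v (c * p + d)) {t : K}
    (ht : t ∈ valBall v p δ) : v (c * t + d) = v (c * p + d) := by
  have hsmall : v (c * (t - p)) < v (c * p + d) :=
    calc v (c * (t - p)) = v c * v (t - p) := v.map_mul _ _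
      _ ≤ δ * v c := by rw [mul_comm δ]; exact mul_le_mul_right ht _
      _ < v (c * p + d) := hpole
  rw [← v.map_add_eq_of_lt_right hsmall]
  ring_nf

theorem valuation_mobius_sub_mobius (hpole : δ * v c < v (c * p + d)) {t s : K}
    (ht : t ∈ valBall v p δ) (hs : s ∈ valBall v p δ) :
    v (mobius a b c d t - mobius a b c d s)
      = v (a * d - b * c) / v (c * p + d) ^ 2 * v (t - s) := by
  have hW : v (c * p + d) ≠ 0 := (zero_le.trans_lt hpole).ne'
  have hvt := valuation_mul_add_eq_of_mem_valBall hpole ht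
  have hvs := valuation_mul_add_eq_of_mem_valBall hpole hs
  rw [mobius_sub_mobius (v.ne_zero_iff.mp (hvt ▸ hW)) (v.ne_zero_iff.mp (hvs ▸ hW)),
    map_div₀, map_mul, map_mul, hvt, hvs, sq, mul_div_right_comm]

theorem mapsTo_mobius_valBall (hpole : δ * v c < v (c * p + d)) :
    MapsTo (mobius a b c d) (valBall v p δ)
      (valBall v (mobius a b c d p) (v (a * d - b * c) / v (c * p + d) ^ 2 * δ)) := by
  intro t ht
  have hp : p ∈ valBall v p δ := by simp [valBall]
  show v _ ≤ _
  rw [valuation_mobius_sub_mobius hpole ht hp]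
  exact mul_le_mul_right ht _

theorem injOn_mobius_valBall (hdet : a * d - b * c ≠ 0) (hpole : δ * v c < v (c * p + d)) :
    InjOn (mobius a b c d) (valBall v p δ) := by
  intro t ht s hs hts
  have hW : v (c * p + d) ≠ 0 := (zero_le.trans_lt hpole).ne'
  have := valuation_mobius_sub_mobius (a := a) (b := b) hpole ht hs
  rw [hts, sub_self, map_zero, eq_comm, mul_eq_zero] at this
  rcases this with h | h
  · exact absurd h (div_ne_zero (v.ne_zero_iff.mpr hdet) (pow_ne_zero 2 hW))
  · exact sub_eq_zero.mp (v.zero_iff.mp h)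

theorem surjOn_mobius_valBall (hdet : a * d - b * c ≠ 0) (hpole : δ * v c < v (c * p + d)) :
    SurjOn (mobius a b c d) (valBall v p δ)
      (valBall v (mobius a b c d p) (v (a * d - b * c) / v (c * p + d) ^ 2 * δ)) := by
  intro y hy
  set V := v (a * d - b * c)
  set W := v (c * p + d)
  set q := mobius a b c d p
  have hW : W ≠ 0 := (zero_le.trans_lt hpole).ne'
  have hV : V ≠ 0 := v.ne_zero_iff.mpr hdet
  have hp : c * p + d ≠ 0 := v.ne_zero_iff.mp hW
  have hdet' : d * a - -b * -c = a * d - b * c := by ring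
  have hvq : v (-c * q + a) = V / W := by rw [neg_mul_mobius_add hp, map_div₀]
  have hpole' : V / W ^ 2 * δ * v (-c) < v (-c * q + a) :=
    calc V / W ^ 2 * δ * v (-c) = V / W ^ 2 * (δ * v c) := by rw [v.map_neg, mul_assoc]
      _ < V / W ^ 2 * W :=
        mul_lt_mul_of_pos_left hpole (zero_lt_iff.mpr (div_ne_zero hV (pow_ne_zero 2 hW)))
      _ = v (-c * q + a) := by rw [hvq]; field_simp
  have hinv_q : mobius d (-b) (-c) a q = p := by
    have := mobius_mobius_inv (a := d) (b := -b) (c := -c) (d := a) (y := p)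
      (by rwa [hdet']) (by rwa [neg_neg])
    rwa [neg_neg, neg_neg] at this
  have hy' : -c * y + a ≠ 0 := by
    rw [← v.ne_zero_iff, valuation_mul_add_eq_of_mem_valBall hpole' hy, hvq]
    exact div_ne_zero hV hW
  refine ⟨mobius d (-b) (-c) a y, ?_, mobius_mobius_inv hdet hy'⟩
  have := mapsTo_mobius_valBall (a := d) (b := -b) hpole' hy
  rwa [hinv_q, hdet', hvq, show V / (V / W) ^ 2 * (V / W ^ 2 * δ) = δ by field_simp] at this

theorem bijOn_mobius_valBall (hdet : a * d - b * c ≠ 0) (hpole : δ * v c < v (c * p + d)) :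
    BijOn (mobius a b c d) (valBall v p δ)
      (valBall v (mobius a b c d p) (v (a * d - b * c) / v (c * p + d) ^ 2 * δ)) :=
  ⟨mapsTo_mobius_valBall hpole, injOn_mobius_valBall hdet hpole,
    surjOn_mobius_valBall hdet hpole⟩

end Valued

theorem stmt_5_general {K Γ₀ : Type*} [Field K] [LinearOrderedCommGroupWithZero Γ₀]
    (v : Valuation K Γ₀) (a b c d p : K) (δ : Γ₀)
    (hdet : a * d - b * c ≠ 0)
    (hpole : δ * v c < v (c * p + d)) :
    Set.BijOn (fun t : K => (a * t + b) / (c * t + d))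
      {y : K | v (y - p) ≤ δ}
      {y : K | v (y - (a * p + b) / (c * p + d)) ≤ v ((b * c - a * d) / (c * p + d) ^ 2) * δ} := by
  have hradius :
      v ((b * c - a * d) / (c * p + d) ^ 2) = v (a * d - b * c) / v (c * p + d) ^ 2 := by
    rw [map_div₀, map_pow, ← v.map_neg, neg_sub]
  rw [hradius]
  exact bijOn_mobius_valBall hdet hpole

theorem stmt_5 {K Γ₀ : Type*} [Field K] [LinearOrderedCommGroupWithZero Γ₀]
    (v : Valuation K Γ₀) (a b c d p : K) (δ : Γ₀) (hδ : δ ≠ 0)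
    (hdet : a * d - b * c ≠ 0)
    (hpole : δ * v c < v (c * p + d)) :
    Set.BijOn (fun t : K => (a * t + b) / (c * t + d))
      {y : K | v (y - p) ≤ δ}
      {y : K | v (y - (a * p + b) / (c * p + d)) ≤ v ((b * c - a * d) / (c * p + d) ^ 2) * δ} :=
  stmt_5_general v a b c d p δ hdet hpole
end

section
/- Let γ(t) = (at+b)/(ct+d) with ad−bc ≠ 0, c ≠ 0, p ∈ K, δ a nonzero radius, and assume |cp+d| ≤ δ·|c| (i.e., the pole of γ lies in B(p,δ)). Then the image under γ of B(p,δ) minus the pole equals {z ∈ K : |z − a/c| ≥ |γ'(∞)|·δ^{−1}}, where γ'(∞) := (bc−ad)/c². -/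
private theorem helperX {Γ₀ : Type*} [LinearOrderedCommGroupWithZero Γ₀] {x y s A : Γ₀}
    (hx : x ≠ 0) (hy : y ≠ 0) (hs : s ≠ 0) (hA : A ≠ 0) :
    A ≤ s * y ↔ x / y ^ 2 * s⁻¹ ≤ x / (y * A) := by
  rw [← div_eq_mul_inv, div_div, pow_two, mul_assoc,
    div_le_div_iff_of_pos_left (zero_lt_iff.2 hx) (by simp [zero_lt_iff, hy, hs]) (by simp [zero_lt_iff, hy, hA]),
    mul_le_mul_iff_right₀ (zero_lt_iff.2 hy), mul_comm y s]

theorem stmt_6 {K Γ₀ : Type*} [Field K] [LinearOrderedCommGroupWithZero Γ₀]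
    (v : Valuation K Γ₀) (a b c d p : K) (δ : Γ₀) (hδ : δ ≠ 0)
    (hdet : a * d - b * c ≠ 0) (hc : c ≠ 0)
    (hpole : v (c * p + d) ≤ δ * v c) :
    (fun t : K => (a * t + b) / (c * t + d)) ''
        ({y : K | v (y - p) ≤ δ} \ {-d / c}) =
      {z : K | v ((b * c - a * d) / c ^ 2) * δ⁻¹ ≤ v (z - a / c)} := by
  have hnum : b * c - a * d ≠ 0 := fun h => hdet (by linear_combination -h)
  have hx : v (b * c - a * d) ≠ 0 := by simp [v.ne_zero_iff, hnum]
  have hy : v c ≠ 0 := by simp [v.ne_zero_iff, hc]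
  ext z
  simp only [Set.mem_image, Set.mem_diff, Set.mem_setOf_eq, Set.mem_singleton_iff]
  constructor
  · rintro ⟨t, ⟨hBt, hnet⟩, rfl⟩
    have hctd : c * t + d ≠ 0 := by
      intro h
      exact hnet (by field_simp; linear_combination h)
    have hA : v (c * t + d) ≠ 0 := by simp [v.ne_zero_iff, hctd]
    have hle : v (c * t + d) ≤ δ * v c := by
      have : c * t + d = c * (t - p) + (c * p + d) := by ring
      rw [this]
      refine (v.map_add _ _).trans (max_le ?_ hpole)
      rw [v.map_mul, mul_comm]
      exact mul_le_mul_left hBt _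
    have key : (a * t + b) / (c * t + d) - a / c = (b * c - a * d) / (c * (c * t + d)) := by
      rw [div_sub_div _ _ hctd hc, div_eq_div_iff (mul_ne_zero hctd hc) (mul_ne_zero hc hctd)]
      ring
    rw [key, v.map_div, v.map_div, v.map_mul, v.map_pow]
    exact (helperX hx hy hδ hA).1 hle
  · intro hz
    have hw : v (z - a / c) ≠ 0 := by
      intro h
      rw [h, le_zero_iff] at hz
      simp [hx, hy, hδ] at hz
    have hza : z - a / c ≠ 0 := fun h => hw (by simp [h])
    have hacz : a - c * z ≠ 0 := by
      intro h
      apply hza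
      field_simp
      linear_combination -h
    set t := (d * z - b) / (a - c * z) with ht
    have hctd : c * t + d = (a * d - b * c) / (a - c * z) := by
      rw [ht]; field_simp; ring
    have hctd0 : c * t + d ≠ 0 := by
      rw [hctd]
      exact div_ne_zero hdet hacz
    have hvacz : v (a - c * z) = v c * v (z - a / c) := by
      have h1 : a - c * z = -(c * (z - a / c)) := by field_simp; ring
      rw [h1, v.map_neg, v.map_mul]
    have hvctd : v (c * t + d) ≤ δ * v c := by
      rw [hctd, v.map_div, hvacz]
      have hvad : v (a * d - b * c) = v (b * c - a * d) := by
        rw [show a * d - b * c = -(b * c - a * d) by ring, v.map_neg]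
      rw [hvad]
      rw [div_le_iff₀ (zero_lt_iff.2 (mul_ne_zero hy hw))]
      rw [v.map_div, v.map_pow, ← div_eq_mul_inv, div_div,
        div_le_iff₀ (zero_lt_iff.2 (mul_ne_zero (pow_ne_zero 2 hy) hδ))] at hz
      calc v (b * c - a * d) ≤ v (z - a / c) * (v c ^ 2 * δ) := hz
        _ = δ * v c * (v c * v (z - a / c)) := by rw [pow_two]; ac_rfl
    refine ⟨t, ⟨?_, ?_⟩, ?_⟩
    · have heq : c * (t - p) = (c * t + d) - (c * p + d) := by ring
      have h2 : v (t - p) * v c ≤ δ * v c := by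
        rw [mul_comm, ← v.map_mul, heq]
        exact (v.map_sub _ _).trans (max_le hvctd hpole)
      exact le_of_mul_le_mul_right h2 (zero_lt_iff.2 hy)
    · intro h
      rw [h] at hctd0
      apply hctd0
      field_simp
      ring
    · show (a * t + b) / (c * t + d) = z
      rw [div_eq_iff hctd0, ht]
      linear_combination div_mul_cancel₀ (d * z - b) hacz
end

section
/- Let K be a field with a valuation and q ∈ K a topologically nilpotent nonzero element. Then for every p ∈ K with p ≠ 0, the closure of the orbit {qⁿ·p : n ∈ ℤ} in the projective line P¹(K) = K ∪ {∞} is the orbit together with the two points 0 and ∞, and this closure is compact. -/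
/-!
Nontriviality of `v` and topological nilpotence give `v q < 1`, so the values
`v (qⁿ p) = (v q)ⁿ v p` tend to `0` as `n → +∞` and grow beyond every bound as `n → -∞`: the
orbit accumulates at `0` and at `∞`. These values are pairwise distinct, so by the ultrametric
inequality at most one orbit point is closer to a given `a ≠ 0` than `v a`; hence every point
outside orbit ∪ {0, ∞} has a closed ball around it missing that set, which is therefore closed.
It is compact as the union of two convergent sequences with their limits.
-/

/-- Topological nilpotence in a linearly ordered commutative group with zero. -/
def IsTopNilpotent {Γ₀ : Type*} [LinearOrderedCommGroupWithZero Γ₀] (ρ : Γ₀) : Prop :=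
  ∀ ε : Γ₀, ε ≠ 0 → ∃ n₀ : ℕ, ∀ n ≥ n₀, ρ ^ n ≤ ε

/-- The topology on `P¹(K) = K ∪ {∞}` generated by the closed balls and the
complements of open balls (together with `∞`). -/
def pTop {K Γ₀ : Type*} [Field K] [LinearOrderedCommGroupWithZero Γ₀]
    (v : Valuation K Γ₀) : TopologicalSpace (OnePoint K) :=
  TopologicalSpace.generateFrom
    ({S | ∃ p ρ, ρ ≠ 0 ∧ S = OnePoint.some '' {y : K | v (y - p) ≤ ρ}} ∪
     {S | ∃ p ρ, ρ ≠ 0 ∧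
        S = insert OnePoint.infty (OnePoint.some '' {y : K | ρ ≤ v (y - p)})})

open Filter Set Topology OnePoint

section Sequences

variable {X : Type*} [TopologicalSpace X] {g : ℤ → X} {x y : X}

theorem closure_range_eq_of_tendsto (hx : Tendsto g atTop (𝓝 x))
    (hy : Tendsto g atBot (𝓝 y)) (hC : IsClosed (range g ∪ {x, y})) :
    closure (range g) = range g ∪ {x, y} := by
  refine (closure_minimal subset_union_left hC).antisymm (union_subset subset_closure ?_)
  have hg : ∀ {l : Filter ℤ}, ∀ᶠ n in l, g n ∈ range g := Eventually.of_forall mem_range_self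
  exact insert_subset (mem_closure_of_tendsto hx hg)
    (singleton_subset_iff.2 (mem_closure_of_tendsto hy hg))

theorem isCompact_range_union_of_tendsto (hx : Tendsto g atTop (𝓝 x))
    (hy : Tendsto g atBot (𝓝 y)) : IsCompact (range g ∪ {x, y}) := by
  have hpos := (hx.comp tendsto_natCast_atTop_atTop).isCompact_insert_range
  have hneg :=
    (hy.comp (tendsto_neg_atTop_atBot.comp tendsto_natCast_atTop_atTop)).isCompact_insert_range
  convert hpos.union hneg using 1
  ext z
  simp only [mem_union, mem_insert_iff, mem_singleton_iff, mem_range, Function.comp_apply]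
  constructor
  · rintro ((⟨n, rfl⟩) | rfl | rfl)
    · obtain ⟨m, rfl | rfl⟩ := Int.eq_nat_or_neg n
      exacts [Or.inl (Or.inr ⟨m, rfl⟩), Or.inr (Or.inr ⟨m, rfl⟩)]
    · exact Or.inl (Or.inl rfl)
    · exact Or.inr (Or.inl rfl)
  · rintro ((rfl | ⟨m, rfl⟩) | (rfl | ⟨m, rfl⟩))
    exacts [Or.inr (Or.inl rfl), Or.inl ⟨_, rfl⟩, Or.inr (Or.inr rfl), Or.inl ⟨_, rfl⟩]

end Sequences

namespace IsTopNilpotent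

variable {Γ₀ : Type*} [LinearOrderedCommGroupWithZero Γ₀] {ρ : Γ₀}

theorem lt_one {γ : Γ₀} (hρ : IsTopNilpotent ρ) (hγ0 : γ ≠ 0) (hγ1 : γ < 1) : ρ < 1 := by
  obtain ⟨n, hn⟩ := hρ γ hγ0
  by_contra! h
  exact (hγ1.trans_le ((one_le_pow₀ h).trans (hn n le_rfl))).false

theorem eventually_zpow_mul_lt (hρ : IsTopNilpotent ρ) (hρ0 : ρ ≠ 0) (hρ1 : ρ < 1) (c : Γ₀)
    {ε : Γ₀} (hε : ε ≠ 0) : ∀ᶠ n : ℤ in atTop, ρ ^ n * c < ε := by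
  rcases eq_or_ne c 0 with rfl | hc
  · simp only [mul_zero]
    exact Eventually.of_forall fun _ ↦ zero_lt_iff.2 hε
  obtain ⟨N, hN⟩ := hρ (ε * c⁻¹) (mul_ne_zero hε (inv_ne_zero hc))
  filter_upwards [eventually_gt_atTop (N : ℤ)] with n hn
  refine (lt_mul_inv_iff₀ (zero_lt_iff.2 hc)).1 ?_
  calc ρ ^ n < ρ ^ (N : ℤ) := zpow_right_strictAnti₀ (zero_lt_iff.2 hρ0) hρ1 hn
    _ ≤ ε * c⁻¹ := by simpa using hN N le_rfl

theorem eventually_lt_zpow_mul (hρ : IsTopNilpotent ρ) (hρ0 : ρ ≠ 0) (hρ1 : ρ < 1) {c : Γ₀}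
    (hc : c ≠ 0) (ε : Γ₀) : ∀ᶠ n : ℤ in atBot, ε < ρ ^ n * c := by
  filter_upwards [tendsto_neg_atBot_atTop.eventually (hρ.eventually_zpow_mul_lt hρ0 hρ1 ε hc)]
    with n hn
  have hρn : 0 < ρ ^ n := zero_lt_iff.2 (zpow_ne_zero n hρ0)
  calc ε = ρ ^ n * (ρ ^ (-n) * ε) := by rw [zpow_neg, mul_inv_cancel_left₀ hρn.ne']
    _ < ρ ^ n * c := mul_lt_mul_of_pos_left hn hρn

end IsTopNilpotent

namespace Valuation

variable {Γ₀ : Type*} [LinearOrderedCommGroupWithZero Γ₀] {K : Type*} [Field K]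
  (v : Valuation K Γ₀)

theorem exists_le_valuation_sub_of_injOn {S : Set K} (hS : InjOn v S) {a : K} (ha0 : a ≠ 0)
    (haS : a ∉ S) : ∃ m ≠ 0, m ≤ v a ∧ ∀ s ∈ S, m ≤ v (s - a) := by
  have hva : v a ≠ 0 := v.ne_zero_iff.2 ha0
  by_cases h : ∃ s ∈ S, v (s - a) < v a
  · obtain ⟨s, hs, hsa⟩ := h
    have hsa0 : v (s - a) ≠ 0 := v.ne_zero_iff.2 (sub_ne_zero.2 fun h ↦ haS (h ▸ hs))
    refine ⟨min (v a) (v (s - a)), (lt_min (zero_lt_iff.2 hva) (zero_lt_iff.2 hsa0)).ne',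
      min_le_left _ _, fun t ht ↦ ?_⟩
    by_cases hta : v (t - a) < v a
    · obtain rfl : t = s := hS ht hs ((v.map_eq_of_sub_lt hta).trans (v.map_eq_of_sub_lt hsa).symm)
      exact min_le_right _ _
    · exact (min_le_left _ _).trans (not_lt.1 hta)
  · simp only [not_exists, not_and, not_lt] at h
    exact ⟨v a, hva, le_rfl, h⟩

theorem isOpen_pTop_closedBall (a : K) {ρ : Γ₀} (hρ : ρ ≠ 0) :
    IsOpen[pTop v] (OnePoint.some '' {y | v (y - a) ≤ ρ}) :=
  TopologicalSpace.isOpen_generateFrom_of_mem (Or.inl ⟨a, ρ, hρ, rfl⟩)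

theorem isClosed_pTop_image_union [v.IsNontrivial] {S : Set K} (hS : InjOn v S) :
    IsClosed[pTop v] (OnePoint.some '' S ∪ {((0 : K) : OnePoint K), ∞}) := by
  let _ := pTop v
  rw [← isOpen_compl_iff, isOpen_iff_forall_mem_open]
  intro z hz
  induction z using OnePoint.rec with
  | infty => exact absurd (Or.inr (Or.inr rfl)) hz
  | coe a =>
    have haS : a ∉ S := fun h ↦ hz (Or.inl (mem_image_of_mem _ h))
    have ha0 : a ≠ 0 := by rintro rfl; exact hz (Or.inr (Or.inl rfl))
    obtain ⟨m, hm0, hma, hmS⟩ := v.exists_le_valuation_sub_of_injOn hS ha0 haS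
    obtain ⟨b, hb0, hb1⟩ := IsNontrivial.exists_lt_one (v := v)
    have hρm : v b * m < m := mul_lt_of_lt_one_left (zero_lt_iff.2 hm0) hb1
    refine ⟨OnePoint.some '' {y | v (y - a) ≤ v b * m}, ?_,
      v.isOpen_pTop_closedBall a (mul_ne_zero (v.ne_zero_iff.2 hb0) hm0), ⟨a, by simp, rfl⟩⟩
    rintro _ ⟨y, hy, rfl⟩ (⟨s, hs, hsy⟩ | h0 | h)
    · obtain rfl := coe_injective hsy
      exact (hmS s hs).not_gt (hy.trans_lt hρm)
    · obtain rfl : y = 0 := coe_injective h0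
      exact hma.not_gt (by simpa using hy.trans_lt hρm)
    · exact coe_ne_infty y h

variable {ι : Type*} {l : Filter ι} {f : ι → K}

theorem tendsto_pTop_coe {a : K} (hf : ∀ ε ≠ 0, ∀ᶠ i in l, v (f i - a) < ε) :
    Tendsto (fun i ↦ (f i : OnePoint K)) l (@nhds _ (pTop v) a) := by
  refine TopologicalSpace.tendsto_nhds_generateFrom_iff.2 ?_
  rintro s (⟨b, ρ, hρ, rfl⟩ | ⟨b, ρ, hρ, rfl⟩) ha
  · have hab : v (a - b) ≤ ρ := by simpa using ha
    filter_upwards [hf ρ hρ] with i hi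
    refine mem_image_of_mem _ ?_
    calc v (f i - b) = v ((f i - a) + (a - b)) := by rw [sub_add_sub_cancel]
      _ ≤ max (v (f i - a)) (v (a - b)) := v.map_add _ _
      _ ≤ ρ := max_le hi.le hab
  · have hab : ρ ≤ v (a - b) := by simpa using ha
    filter_upwards [hf ρ hρ] with i hi
    refine mem_insert_of_mem _ (mem_image_of_mem _ ?_)
    calc ρ ≤ v (a - b) := hab
      _ = v ((f i - a) + (a - b)) := (v.map_add_eq_of_lt_right (hi.trans_le hab)).symm
      _ = v (f i - b) := by rw [sub_add_sub_cancel]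

theorem tendsto_pTop_infty (hf : ∀ ε, ∀ᶠ i in l, ε < v (f i)) :
    Tendsto (fun i ↦ (f i : OnePoint K)) l (@nhds _ (pTop v) ∞) := by
  refine TopologicalSpace.tendsto_nhds_generateFrom_iff.2 ?_
  rintro s (⟨b, ρ, hρ, rfl⟩ | ⟨b, ρ, hρ, rfl⟩) hs
  · obtain ⟨y, -, hy⟩ := hs
    exact absurd hy (coe_ne_infty y)
  · filter_upwards [hf (max ρ (v b))] with i hi
    refine mem_insert_of_mem _ (mem_image_of_mem _ ?_)
    show ρ ≤ v (f i - b)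
    rw [v.map_sub_eq_of_lt_left ((le_max_right _ _).trans_lt hi)]
    exact (le_max_left _ _).trans hi.le

end Valuation

theorem stmt_9 {K Γ₀ : Type*} [Field K] [LinearOrderedCommGroupWithZero Γ₀]
    (v : Valuation K Γ₀) (hnt : ∃ x : K, v x ≠ 0 ∧ v x ≠ 1)
    (q p : K) (hq0 : q ≠ 0) (hp : p ≠ 0) (hq : IsTopNilpotent (v q)) :
    @closure _ (pTop v) {x : OnePoint K | ∃ n : ℤ, x = OnePoint.some (q ^ n * p)} =
      {x : OnePoint K | ∃ n : ℤ, x = OnePoint.some (q ^ n * p)} ∪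
        {OnePoint.some (0 : K), OnePoint.infty} ∧
    @IsCompact _ (pTop v)
      (@closure _ (pTop v) {x : OnePoint K | ∃ n : ℤ, x = OnePoint.some (q ^ n * p)}) := by
  let _ := pTop v
  have : v.IsNontrivial := ⟨hnt⟩
  obtain ⟨b, hb0, hb1⟩ := Valuation.IsNontrivial.exists_lt_one (v := v)
  have hvq0 : v q ≠ 0 := v.ne_zero_iff.2 hq0
  have hvq1 : v q < 1 := hq.lt_one (v.ne_zero_iff.2 hb0) hb1
  have hval (n : ℤ) : v (q ^ n * p) = v q ^ n * v p := by rw [map_mul, map_zpow₀]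
  set g : ℤ → OnePoint K := fun n ↦ ((q ^ n * p : K) : OnePoint K)
  have horbit : {x : OnePoint K | ∃ n : ℤ, x = OnePoint.some (q ^ n * p)} = range g := by
    ext; simp [g, eq_comm]
  have h0 : Tendsto g atTop (𝓝 ((0 : K) : OnePoint K)) :=
    v.tendsto_pTop_coe fun ε hε ↦ by
      simpa [hval] using hq.eventually_zpow_mul_lt hvq0 hvq1 (v p) hε
  have hinf : Tendsto g atBot (𝓝 ∞) :=
    v.tendsto_pTop_infty fun ε ↦ by
      simpa [hval] using hq.eventually_lt_zpow_mul hvq0 hvq1 (v.ne_zero_iff.2 hp) ε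
  have hinj : InjOn v (range fun n : ℤ ↦ q ^ n * p) := by
    refine Function.Injective.injOn_range fun m n h ↦ ?_
    simp only [Function.comp_apply, hval] at h
    exact (zpow_right_strictAnti₀ (zero_lt_iff.2 hvq0) hvq1).injective
      (mul_right_cancel₀ (v.ne_zero_iff.2 hp) h)
  have hC : IsClosed (range g ∪ {((0 : K) : OnePoint K), ∞}) := by
    have hC := v.isClosed_pTop_image_union hinj
    rwa [← range_comp] at hC
  rw [horbit, closure_range_eq_of_tendsto h0 hinf hC]
  exact ⟨rfl, isCompact_range_union_of_tendsto h0 hinf⟩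
end

section
/- Let K be a complete valued field and let q, r ∈ K* be topologically nilpotent elements such that |q|ᵐ ≠ |r|ⁿ for all nonzero integers m, n. Then the closure of the set W = {qⁿ·rᵐ : (n,m) ∈ ℤ²} in K is not compact; specifically, W ∩ {x : |q| < |x| ≤ 1} is infinite and each of its points x is isolated in W (the ball B(x,|q|) meets W only in x). -/
lemma val_pair_inj {Γ₀ : Type*} [LinearOrderedCommGroupWithZero Γ₀] {α β : Γ₀}
    (hα0 : α ≠ 0) (hβ0 : β ≠ 0) (hα1 : α < 1) (hβ1 : β < 1)
    (hmn : ∀ m n : ℤ, m ≠ 0 → n ≠ 0 → α ^ m ≠ β ^ n)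
    {a b c d : ℤ} (h : α ^ a * β ^ b = α ^ c * β ^ d) : a = c ∧ b = d := by
  have hαpos : (0:Γ₀) < α := zero_lt_iff.mpr hα0
  have hβpos : (0:Γ₀) < β := zero_lt_iff.mpr hβ0
  have key : α ^ (a - c) = β ^ (d - b) := by
    rw [zpow_sub₀ hα0, zpow_sub₀ hβ0,
      div_eq_div_iff (zpow_ne_zero _ hα0) (zpow_ne_zero _ hβ0)]
    rw [mul_comm (β ^ d) (α ^ c)]
    exact h
  rcases eq_or_ne (a - c) 0 with hac | hac
  · rw [hac, zpow_zero] at key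
    have : d - b = 0 :=
      zpow_right_injective₀ hβpos hβ1.ne (a := β)
        (show β ^ (d - b) = β ^ (0:ℤ) by simpa using key.symm)
    omega
  · rcases eq_or_ne (d - b) 0 with hdb | hdb
    · rw [hdb, zpow_zero] at key
      have : a - c = 0 :=
        zpow_right_injective₀ hαpos hα1.ne (a := α)
          (show α ^ (a - c) = α ^ (0:ℤ) by simpa using key)
      omega
    · exact absurd key (hmn _ _ hac hdb)

theorem stmt_12 {K Γ₀ : Type*} [Field K] [LinearOrderedCommGroupWithZero Γ₀]
    [Valued K Γ₀] [CompleteSpace K]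
    (q r : K) (hq0 : q ≠ 0) (hr0 : r ≠ 0)
    (hq : IsTopNilpotent (Valued.v q : Γ₀)) (hr : IsTopNilpotent (Valued.v r : Γ₀))
    (hlt : (Valued.v q : Γ₀) < Valued.v r) (hr1 : (Valued.v r : Γ₀) < 1)
    (hmn : ∀ m n : ℤ, m ≠ 0 → n ≠ 0 → (Valued.v q : Γ₀) ^ m ≠ (Valued.v r : Γ₀) ^ n) :
    ¬ IsCompact (closure {x : K | ∃ n m : ℤ, x = q ^ n * r ^ m}) ∧
    Set.Infinite ({x : K | ∃ n m : ℤ, x = q ^ n * r ^ m} ∩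
      {x : K | (Valued.v q : Γ₀) < Valued.v x ∧ (Valued.v x : Γ₀) ≤ 1}) ∧
    ∀ x ∈ {x : K | ∃ n m : ℤ, x = q ^ n * r ^ m} ∩
        {x : K | (Valued.v q : Γ₀) < Valued.v x ∧ (Valued.v x : Γ₀) ≤ 1},
      ∀ y ∈ {x : K | ∃ n m : ℤ, x = q ^ n * r ^ m},
        (Valued.v (y - x) : Γ₀) ≤ Valued.v q → y = x := by
  classical
  set v : Valuation K Γ₀ := Valued.v with hv
  set α : Γ₀ := v q with hαdef
  set β : Γ₀ := v r with hβdef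
  have hα0 : α ≠ 0 := (v.ne_zero_iff).mpr hq0
  have hβ0 : β ≠ 0 := (v.ne_zero_iff).mpr hr0
  have hαpos : (0:Γ₀) < α := zero_lt_iff.mpr hα0
  have hβpos : (0:Γ₀) < β := zero_lt_iff.mpr hβ0
  have hα1 : α < 1 := hlt.trans hr1
  set W : Set K := {x : K | ∃ n m : ℤ, x = q ^ n * r ^ m} with hW
  set S : Set K := W ∩ {x : K | α < v x ∧ v x ≤ 1} with hS
  -- values of elements of W
  have hval : ∀ a b : ℤ, v (q ^ a * r ^ b) = α ^ a * β ^ b := by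
    intro a b
    rw [map_mul, map_zpow₀, map_zpow₀]
  -- elements of W with equal values are equal
  have hvW : ∀ a b c d : ℤ, v (q ^ a * r ^ b) = v (q ^ c * r ^ d) →
      q ^ a * r ^ b = q ^ c * r ^ d := by
    intro a b c d h
    rw [hval, hval] at h
    obtain ⟨h1, h2⟩ := val_pair_inj hα0 hβ0 hα1 hr1 hmn h
    rw [h1, h2]
  -- claim 3
  have claim3 : ∀ x ∈ S, ∀ y ∈ W, v (y - x) ≤ α → y = x := by
    rintro x ⟨⟨a, b, rfl⟩, hx1, hx2⟩ y ⟨c, d, rfl⟩ hle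
    by_contra hne
    have hvne : v (q ^ c * r ^ d) ≠ v (q ^ a * r ^ b) := fun h => hne (hvW _ _ _ _ h)
    have hmax : v (q ^ c * r ^ d - q ^ a * r ^ b) =
        max (v (q ^ c * r ^ d)) (v (q ^ a * r ^ b)) := by
      rw [sub_eq_add_neg, v.map_add_of_distinct_val (by simpa using hvne), v.map_neg]
    rw [hmax] at hle
    exact absurd ((le_max_right _ _).trans hle) (not_le.mpr hx1)
  -- separation of distinct points of S
  have hsep : ∀ x ∈ S, ∀ x' ∈ S, x ≠ x' → α < v (x - x') := by
    rintro x ⟨⟨a, b, rfl⟩, hx1, hx2⟩ x' ⟨⟨c, d, rfl⟩, hx1', hx2'⟩ hne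
    have hvne : v (q ^ a * r ^ b) ≠ v (q ^ c * r ^ d) := fun h => hne (hvW _ _ _ _ h)
    have hmax : v (q ^ a * r ^ b - q ^ c * r ^ d) =
        max (v (q ^ a * r ^ b)) (v (q ^ c * r ^ d)) := by
      rw [sub_eq_add_neg, v.map_add_of_distinct_val (by simpa using hvne), v.map_neg]
    rw [hmax]
    exact lt_max_of_lt_left hx1
  -- for each m : ℕ there is a point of S of value α ^ n * β ^ m
  have exists_pt : ∀ m : ℕ, ∃ x : K, x ∈ S ∧ ∃ n : ℤ, v x = α ^ n * β ^ (m : ℤ) := by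
    intro m
    obtain ⟨k₀, hk⟩ := hq (α * β ^ (m : ℤ)) (mul_ne_zero hα0 (zpow_ne_zero _ hβ0))
    have hkk : α ^ (k₀ : ℤ) < β ^ (m : ℤ) := by
      have h1 : α ^ (k₀ : ℤ) ≤ α * β ^ (m : ℤ) := by
        simpa [zpow_natCast] using hk k₀ le_rfl
      have h2 : β ^ (m : ℤ) * α < β ^ (m : ℤ) * 1 :=
        mul_lt_mul_of_pos_left hα1 (zpow_pos hβpos _)
      rw [mul_one, mul_comm] at h2
      exact lt_of_le_of_lt h1 h2
    set P : ℤ → Prop := fun n => α ^ n * β ^ (m : ℤ) ≤ 1 with hP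
    have hP0 : P 0 := by
      simp only [hP, zpow_zero, one_mul]
      exact zpow_le_one₀ hβpos hr1.le (Int.natCast_nonneg m)
    have Hbdd : ∀ z : ℤ, P z → -(k₀ : ℤ) ≤ z := by
      intro z hz
      by_contra hcon
      push_neg at hcon
      have h1 : α ^ (-(k₀ : ℤ)) ≤ α ^ z :=
        zpow_le_zpow_right_of_le_one₀ hαpos hα1.le hcon.le
      have h2 : (β ^ (m : ℤ))⁻¹ < α ^ (-(k₀ : ℤ)) := by
        rw [zpow_neg]
        exact (inv_lt_inv₀ (zpow_pos hβpos _) (zpow_pos hαpos _)).mpr hkk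
      have h3 : β ^ (m : ℤ) * (β ^ (m : ℤ))⁻¹ < β ^ (m : ℤ) * α ^ (-(k₀ : ℤ)) :=
        mul_lt_mul_of_pos_left h2 (zpow_pos hβpos _)
      rw [mul_inv_cancel₀ (zpow_ne_zero _ hβ0)] at h3
      have h4 : (1:Γ₀) < β ^ (m : ℤ) * α ^ z :=
        lt_of_lt_of_le h3 (mul_le_mul_right h1 _)
      have : ¬ P z := by
        simp only [hP, not_le]
        rw [mul_comm]
        exact h4
      exact this hz
    obtain ⟨n, hPn, hmin⟩ := Int.exists_least_of_bdd ⟨-(k₀ : ℤ), Hbdd⟩ ⟨0, hP0⟩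
    refine ⟨q ^ n * r ^ (m : ℤ), ⟨⟨n, m, rfl⟩, ?_, ?_⟩, n, hval n m⟩
    · -- α < v x
      have hnot : ¬ P (n - 1) := fun h => absurd (hmin _ h) (by omega)
      simp only [hP, not_le] at hnot
      have h5 : α * 1 < α * (α ^ (n - 1) * β ^ (m : ℤ)) :=
        mul_lt_mul_of_pos_left hnot hαpos
      rw [mul_one] at h5
      have heq : α * (α ^ (n - 1) * β ^ (m : ℤ)) = α ^ n * β ^ (m : ℤ) := by
        rw [← mul_assoc, mul_comm α (α ^ (n - 1)), ← zpow_add_one₀ hα0, sub_add_cancel]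
      rw [heq] at h5
      rw [hval]
      exact h5
    · rw [hval]; exact hPn
  choose f hfS g hfg using exists_pt
  -- claim 2 : S is infinite
  have claim2 : S.Infinite := by
    have hinj : Function.Injective f := by
      intro m m' h
      have : v (f m) = v (f m') := by rw [h]
      rw [hfg m, hfg m'] at this
      obtain ⟨-, h2⟩ := val_pair_inj hα0 hβ0 hα1 hr1 hmn this
      exact_mod_cast h2
    exact Set.infinite_of_injective_forall_mem hinj hfS
  refine ⟨?_, claim2, claim3⟩
  -- claim 1 : not compact
  intro hC
  -- the open "balls"
  set U : K → Set K := fun x => {y : K | v (y - x) < α} with hU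
  have hUopen : ∀ x : K, IsOpen (U x) := by
    intro x
    rw [isOpen_iff_mem_nhds]
    intro z hz
    rw [Valued.mem_nhds]
    refine ⟨Units.mk0 (Valued.v.restrict q) (fun h => hq0 (by
      simpa using congrArg MonoidWithZeroHom.ValueGroup₀.embedding h)), fun y hy => ?_⟩
    have hy' : v (y - z) < α := by
      have := (Valued.v.restrict_lt_iff_lt_embedding).mp hy
      simpa using this
    have : v (y - x) ≤ max (v (y - z)) (v (z - x)) := by
      have := v.map_add (y - z) (z - x)
      simpa using this
    exact lt_of_le_of_lt this (max_lt hy' hz)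
  -- S is closed
  have hSclosed : IsClosed S := by
    refine isClosed_of_closure_subset ?_
    intro z hz
    have hnhd : ∀ γ : Γ₀, γ ≠ 0 → ∃ x ∈ S, v (x - z) < γ := by
      intro γ hγ
      have hmem : {y : K | v (y - z) < γ} ∈ nhds z := by
        rw [Valued.mem_nhds]
        obtain ⟨n, hn⟩ := hq γ hγ
        have hqn : v (q ^ n) ≠ 0 := (v.ne_zero_iff).mpr (pow_ne_zero _ hq0)
        refine ⟨Units.mk0 (Valued.v.restrict (q ^ n)) (fun h => hqn (by
          simpa using congrArg MonoidWithZeroHom.ValueGroup₀.embedding h)), fun y hy => ?_⟩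
        have hy' : v (y - z) < v (q ^ n) := by
          have := (Valued.v.restrict_lt_iff_lt_embedding).mp hy
          simpa using this
        exact lt_of_lt_of_le hy' (by rw [map_pow]; exact hn n le_rfl)
      obtain ⟨x, hx1, hx2⟩ := (mem_closure_iff_nhds.mp hz _ hmem)
      exact ⟨x, hx2, hx1⟩
    obtain ⟨x, hxS, hxz⟩ := hnhd α hα0
    by_cases hzx : z = x
    · rw [hzx]; exact hxS
    · exfalso
      have hvxz : v (x - z) ≠ 0 := by
        rw [v.ne_zero_iff]
        exact sub_ne_zero.mpr (fun h => hzx (h.symm))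
      obtain ⟨x', hx'S, hx'z⟩ := hnhd (v (x - z)) hvxz
      have hne : x' ≠ x := by
        intro h
        rw [h] at hx'z
        exact lt_irrefl _ hx'z
      have hxx' : v (x' - x) < α := by
        have h1 : v (x' - x) ≤ max (v (x' - z)) (v (x - z)) := by
          have := v.map_sub (x' - z) (x - z)
          simpa using this
        exact lt_of_le_of_lt h1 (max_lt (hx'z.trans hxz) hxz)
      exact absurd hxx' (not_lt.mpr (hsep x' hx'S x hxS hne).le)
  -- S is compact
  have hScompact : IsCompact S :=
    hC.of_isClosed_subset hSclosed ((Set.inter_subset_left).trans subset_closure)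
  -- finite subcover
  have hcover : S ⊆ ⋃ x : S, U (x : K) := by
    intro y hy
    refine Set.mem_iUnion.mpr ⟨⟨y, hy⟩, ?_⟩
    simp only [hU, Set.mem_setOf_eq, sub_self, map_zero]
    exact hαpos
  obtain ⟨t, ht⟩ := hScompact.elim_finite_subcover (fun x : S => U (x : K))
    (fun x => hUopen x) hcover
  have hsubset : S ⊆ (fun x : S => (x : K)) '' (t : Set S) := by
    intro y hy
    obtain ⟨x, hxt, hyU⟩ := Set.mem_iUnion₂.mp (ht hy)
    have : y = (x : K) := by
      by_contra hne
      exact absurd hyU (not_lt.mpr (hsep y hy x x.2 hne).le)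
    exact ⟨x, hxt, this.symm⟩
  exact claim2 (Set.Finite.subset (t.finite_toSet.image _) hsubset)
end

section
/- Let Λ₀ be a linearly ordered commutative group with zero and suppose ρ₁, …, ρₙ ∈ Λ are such that the product ρ₁⋯ρₙ has topologically nilpotent inverse (i.e., (ρ₁⋯ρₙ)^{−k} → 0 as k → ∞) and each ρᵢ ≥ 1. Then at least one ρᵢ has topologically nilpotent inverse. -/
/-! The inverse of a largest factor `ρ i` satisfies `(ρ i)⁻¹ ^ n ≤ (∏ j, ρ j)⁻¹`, so its powers along
the multiples of `n` tend to zero; since `(ρ i)⁻¹ ≤ 1`, its powers are antitone and all of them do. -/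

/-- Topological nilpotence in a (multiplicative) linearly ordered commutative group:
the powers tend to zero, i.e. are eventually below any given element. -/
def IsTopNilpotentGrp {Λ : Type*} [CommGroup Λ] [LinearOrder Λ] [IsOrderedMonoid Λ] (σ : Λ) : Prop :=
  ∀ ε : Λ, ∃ n₀ : ℕ, ∀ n ≥ n₀, σ ^ n ≤ ε

theorem IsTopNilpotentGrp.of_pow_le {Λ : Type*} [CommGroup Λ] [LinearOrder Λ] [IsOrderedMonoid Λ]
    {σ τ : Λ} {k : ℕ} (hτ : IsTopNilpotentGrp τ) (hσ : σ ≤ 1) (hle : σ ^ k ≤ τ) :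
    IsTopNilpotentGrp σ := by
  intro ε
  obtain ⟨n₀, hn₀⟩ := hτ ε
  refine ⟨k * n₀, fun n hn => ?_⟩
  calc σ ^ n ≤ σ ^ (k * n₀) := pow_le_pow_right_of_le_one' hσ hn
    _ = (σ ^ k) ^ n₀ := pow_mul σ k n₀
    _ ≤ τ ^ n₀ := pow_le_pow_left' hle n₀
    _ ≤ ε := hn₀ n₀ le_rfl

theorem stmt_14 {Λ : Type*} [CommGroup Λ] [LinearOrder Λ] [IsOrderedMonoid Λ] {n : ℕ} (hn : 0 < n)
    (ρ : Fin n → Λ) (h1 : ∀ i, 1 ≤ ρ i)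
    (h : IsTopNilpotentGrp (∏ i, ρ i)⁻¹) :
    ∃ i, IsTopNilpotentGrp ((ρ i)⁻¹) := by
  have : Nonempty (Fin n) := ⟨⟨0, hn⟩⟩
  obtain ⟨i, hi⟩ := Finite.exists_max ρ
  have hprod : ∏ j, ρ j ≤ ρ i ^ n := by
    simpa using Finset.prod_le_pow_card Finset.univ ρ (ρ i) fun j _ => hi j
  refine ⟨i, h.of_pow_le (inv_le_one'.mpr (h1 i)) (k := n) ?_⟩
  rw [inv_pow]
  exact inv_le_inv_iff.mpr hprod
end

section
/- Let G be a finite connected graph with edge weights w(e) ∈ Λ_{>1} in a totally ordered abelian group Λ, such that for every cycle c in G the inverse of its total weight w(c) = ∏_{e ∈ c} w(e) is topologically nilpotent. If G has first Betti number g, then there exist g edges e₁, …, e_g with each w(eᵢ)^{−1} topologically nilpotent such that removing e₁, …, e_g from G yields a spanning tree. -/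
open SimpleGraph in
lemma aux_conn_del {V : Type*} {G : SimpleGraph V} (hconn : G.Connected)
    {e : Sym2 V} (hnb : ¬ G.IsBridge e) : (G.deleteEdges {e}).Connected := by
  refine Connected.mk ?_ (nonempty := hconn.nonempty)
  intro a b
  obtain ⟨p⟩ := hconn a b
  induction p with
  | nil => rfl
  | @cons x y z h q ih =>
    refine Reachable.trans ?_ ih
    by_cases hxy : s(x, y) = e
    · induction e using Sym2.ind with
      | _ v w =>
        rw [Sym2.eq_iff] at hxy
        have hnb' : (G \ fromEdgeSet {s(v, w)}).Reachable v w := by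
          rw [isBridge_iff, not_not] at hnb
          exact hnb
        have hR : (G.deleteEdges {s(v, w)}).Reachable v w := hnb'
        rcases hxy with ⟨rfl, rfl⟩ | ⟨rfl, rfl⟩
        · exact hR
        · exact hR.symm
    · exact Adj.reachable (by rw [deleteEdges_adj]; exact ⟨h, by simpa using hxy⟩)

open SimpleGraph in
lemma aux_exists_tree {V : Type*} [Fintype V] (P : Sym2 V → Prop) :
    ∀ (n : ℕ) (G : SimpleGraph V), G.edgeSet.ncard = n → G.Connected →
      (∀ (u : V) (c : G.Walk u u), c.IsCycle → ∃ e ∈ c.edges, P e) →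
      ∃ s : Finset (Sym2 V), ↑s ⊆ G.edgeSet ∧ (∀ e ∈ s, P e) ∧
        (G.deleteEdges ↑s).IsTree := by
  classical
  intro n
  induction n using Nat.strong_induction_on with
  | _ n ih =>
    intro G hn hconn hyp
    by_cases hac : G.IsAcyclic
    · refine ⟨∅, by simp, by simp, ?_⟩
      rw [Finset.coe_empty, deleteEdges_empty]
      exact ⟨hconn, hac⟩
    · rw [IsAcyclic] at hac; push_neg at hac
      obtain ⟨u, c, hc⟩ := hac
      obtain ⟨e, hec, hPe⟩ := hyp u c hc
      have heG : e ∈ G.edgeSet := c.edges_subset_edgeSet hec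
      have hnb : ¬ G.IsBridge e := by
        rw [isBridge_iff_mem_and_forall_cycle_notMem heG]
        push_neg
        exact ⟨u, c, hc, hec⟩
      have hE' : (G.deleteEdges {e}).edgeSet = G.edgeSet \ {e} :=
        edgeSet_deleteEdges _
      have hlt : (G.deleteEdges {e}).edgeSet.ncard < n := by
        rw [hE', ← hn]
        exact Set.ncard_diff_singleton_lt_of_mem heG (Set.toFinite _)
      have hle : G.deleteEdges {e} ≤ G := deleteEdges_le _
      have hyp' : ∀ (v : V) (c' : (G.deleteEdges {e}).Walk v v), c'.IsCycle →
          ∃ f ∈ c'.edges, P f := by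
        intro v c' hc'
        obtain ⟨f, hf, hPf⟩ := hyp v (c'.mapLe hle) (hc'.mapLe hle)
        refine ⟨f, ?_, hPf⟩
        simpa [Walk.edges_map, Sym2.map_id'] using hf
      obtain ⟨s', hs'sub, hs'P, hs'tree⟩ :=
        ih _ hlt (G.deleteEdges {e}) rfl (aux_conn_del hconn hnb) hyp'
      refine ⟨insert e s', ?_, ?_, ?_⟩
      · intro f hf
        simp only [Finset.coe_insert, Set.mem_insert_iff] at hf
        rcases hf with rfl | hf
        · exact heG
        · exact ((hE' ▸ hs'sub hf) : f ∈ G.edgeSet \ {e}).1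
      · intro f hf
        rcases Finset.mem_insert.mp hf with rfl | hf
        · exact hPe
        · exact hs'P f hf
      · have hcoe : (↑(insert e s') : Set (Sym2 V)) = {e} ∪ ↑s' := by
          rw [Finset.coe_insert, Set.insert_eq]
        rw [hcoe, ← deleteEdges_deleteEdges]
        exact hs'tree

theorem stmt_15 {V Λ : Type*} [Fintype V] [DecidableEq V] [CommGroup Λ] [LinearOrder Λ] [IsOrderedMonoid Λ]
    (G : SimpleGraph V) [DecidableRel G.Adj] (hconn : G.Connected)
    (w : Sym2 V → Λ) (hw : ∀ e ∈ G.edgeSet, 1 < w e)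
    (hcyc : ∀ (u : V) (c : G.Walk u u), c.IsCycle →
      IsTopNilpotentGrp ((c.edges.map w).prod)⁻¹)
    (g : ℕ) (hg : g + Fintype.card V = G.edgeFinset.card + 1) :
    ∃ s : Finset (Sym2 V), s.card = g ∧ ↑s ⊆ G.edgeSet ∧
      (∀ e ∈ s, IsTopNilpotentGrp ((w e)⁻¹)) ∧
      (G.deleteEdges ↑s).IsTree := by
  classical
  have hyp : ∀ (u : V) (c : G.Walk u u), c.IsCycle →
      ∃ e ∈ c.edges, IsTopNilpotentGrp ((w e)⁻¹) := by
    intro u c hc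
    have hk : 1 ≤ c.edges.length := by
      rw [c.length_edges]; have := hc.three_le_length; omega
    have hne : c.edges ≠ [] := by
      intro h; rw [h] at hk; simp at hk
    obtain ⟨e, he⟩ : ∃ e, c.edges.argmax w = some e := by
      cases h : c.edges.argmax w with
      | none => exact absurd (List.argmax_eq_none.mp h) hne
      | some e => exact ⟨e, rfl⟩
    have hemem : e ∈ c.edges := List.argmax_mem he
    have hmax : ∀ a ∈ c.edges, w a ≤ w e := fun a ha => List.le_of_mem_argmax ha he
    refine ⟨e, hemem, ?_⟩
    have h1 : (1 : Λ) < w e := hw e (c.edges_subset_edgeSet hemem)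
    have hσ1 : (w e)⁻¹ ≤ 1 := by
      rw [inv_le_one']; exact h1.le
    have hprodle : (c.edges.map w).prod ≤ (w e) ^ c.edges.length := by
      have := List.prod_le_pow_card (c.edges.map w) (w e) (by
        intro x hx
        obtain ⟨a, ha, rfl⟩ := List.mem_map.mp hx
        exact hmax a ha)
      simpa using this
    have hσk : ((w e)⁻¹) ^ c.edges.length ≤ ((c.edges.map w).prod)⁻¹ := by
      rw [inv_pow]
      exact inv_le_inv' hprodle
    intro ε
    obtain ⟨n₀, hn₀⟩ := hcyc u c hc ε
    refine ⟨c.edges.length * n₀, fun m hm => ?_⟩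
    calc ((w e)⁻¹) ^ m
        = ((w e)⁻¹) ^ (c.edges.length * n₀) * ((w e)⁻¹) ^ (m - c.edges.length * n₀) := by
          rw [← pow_add]; congr 1; omega
      _ ≤ ((w e)⁻¹) ^ (c.edges.length * n₀) * 1 :=
          mul_le_mul_right (pow_le_one' hσ1 _) _
      _ = (((w e)⁻¹) ^ c.edges.length) ^ n₀ := by rw [mul_one, pow_mul]
      _ ≤ (((c.edges.map w).prod)⁻¹) ^ n₀ := pow_le_pow_left' hσk n₀
      _ ≤ ε := hn₀ n₀ le_rfl
  obtain ⟨s, hsub, hP, htree⟩ := aux_exists_tree _ G.edgeSet.ncard G rfl hconn hyp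
  refine ⟨s, ?_, hsub, hP, htree⟩
  -- cardinality
  have hVpos : 1 ≤ Fintype.card V := Fintype.card_pos_iff.mpr hconn.nonempty
  have hTE : (G.deleteEdges ↑s).edgeSet = G.edgeSet \ ↑s := SimpleGraph.edgeSet_deleteEdges _
  have hTcard : (G.deleteEdges ↑s).edgeSet.ncard = G.edgeSet.ncard - s.card := by
    rw [hTE, Set.ncard_diff hsub (Set.toFinite _), Set.ncard_coe_finset]
  have hsle : s.card ≤ G.edgeSet.ncard := by
    rw [← Set.ncard_coe_finset]
    exact Set.ncard_le_ncard hsub (Set.toFinite _)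
  have hGE : G.edgeSet.ncard = G.edgeFinset.card := by
    rw [SimpleGraph.edgeFinset, Set.ncard_eq_toFinset_card']
  have htcount : (G.deleteEdges ↑s).edgeFinset.card + 1 = Fintype.card V :=
    htree.card_edgeFinset
  have hTE2 : (G.deleteEdges ↑s).edgeSet.ncard = (G.deleteEdges ↑s).edgeFinset.card := by
    rw [SimpleGraph.edgeFinset, Set.ncard_eq_toFinset_card']
  omega
end

section
/- Let K be a valued field whose residue field k has more than n elements, and let ρ₁, …, ρₙ ∈ Λ with each ρᵢ > 1. Then inside the unit ball O = B(0,1) there exist n pairwise disjoint closed balls B₁, …, Bₙ ⊆ O with d(O, Bᵢ) = ρᵢ for all i, where for B' ⊆ B the distance d(B,B') is the ratio radius(B)/radius(B'); equivalently, Bᵢ has radius ρᵢ^{−1} and any two of the Bᵢ are disjoint. -/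
/-!
Lift `n` distinct residue classes to centres in `O`. Centres with distinct residues are at
distance `1`, while the balls have radii `ρᵢ⁻¹ < 1`, so by the ultrametric inequality the balls
are disjoint, and they lie in `O` because their centres and radii do.
-/

namespace Valuation

variable {K Γ₀ : Type*} [Field K] [LinearOrderedCommGroupWithZero Γ₀] (v : Valuation K Γ₀)

theorem closedBall_subset_integers {p : K} {r : Γ₀} (hp : v p ≤ 1) (hr : r ≤ 1) :
    {y : K | v (y - p) ≤ r} ⊆ {y : K | v y ≤ 1} := fun y hy => by
  simpa using v.map_add_le (hy.trans hr) hp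

theorem map_sub_le_max_of_mem_closedBall {p q y : K} {r s : Γ₀}
    (hp : v (y - p) ≤ r) (hq : v (y - q) ≤ s) : v (p - q) ≤ max r s := by
  have hpy : v (p - y) ≤ max r s := (v.map_sub_swap p y ▸ hp).trans (le_max_left r s)
  simpa using v.map_add_le hpy (hq.trans (le_max_right r s))

theorem disjoint_closedBall_of_lt_map_sub {p q : K} {r s : Γ₀}
    (hr : r < v (p - q)) (hs : s < v (p - q)) :
    Disjoint {y : K | v (y - p) ≤ r} {y : K | v (y - q) ≤ s} :=
  Set.disjoint_left.mpr fun _ hp hq =>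
    (max_lt hr hs).not_ge (v.map_sub_le_max_of_mem_closedBall hp hq)

theorem one_le_map_sub_of_residue_ne {a b : v.valuationSubring}
    (h : IsLocalRing.residue _ a ≠ IsLocalRing.residue _ b) : 1 ≤ v ((a : K) - b) := by
  rw [Ne, ← sub_eq_zero, ← _root_.map_sub, IsLocalRing.residue_eq_zero_iff,
    v.mem_maximalIdeal_iff, not_lt] at h
  simpa using h

end Valuation

theorem stmt_17 {K Γ₀ : Type*} [Field K] [LinearOrderedCommGroupWithZero Γ₀]
    (v : Valuation K Γ₀) {n : ℕ} (ρ : Fin n → Γ₀) (hρ : ∀ i, 1 < ρ i)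
    (hk : (n : Cardinal) < Cardinal.mk (IsLocalRing.ResidueField v.valuationSubring)) :
    ∃ p : Fin n → K, (∀ i, v (p i) ≤ 1) ∧
      (∀ i, {y : K | v (y - p i) ≤ (ρ i)⁻¹} ⊆ {y : K | v y ≤ 1}) ∧
      ∀ i j, i ≠ j →
        Disjoint {y : K | v (y - p i) ≤ (ρ i)⁻¹} {y : K | v (y - p j) ≤ (ρ j)⁻¹} := by
  obtain ⟨e⟩ : Nonempty (Fin n ↪ IsLocalRing.ResidueField v.valuationSubring) :=
    Cardinal.lift_mk_le'.mp (by simpa using hk.le)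
  let q := fun i => Function.surjInv IsLocalRing.residue_surjective (e i)
  have hq : ∀ i, IsLocalRing.residue _ (q i) = e i :=
    fun i => Function.surjInv_eq IsLocalRing.residue_surjective (e i)
  have hρ_inv : ∀ i, (ρ i)⁻¹ < 1 := fun i => inv_lt_one_of_one_lt₀ (hρ i)
  refine ⟨fun i => q i, fun i => (q i).2,
    fun i => v.closedBall_subset_integers (q i).2 (hρ_inv i).le, fun i j hij => ?_⟩
  have hres : IsLocalRing.residue _ (q i) ≠ IsLocalRing.residue _ (q j) := by
    rw [hq, hq]
    exact e.injective.ne hij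
  have hsep := v.one_le_map_sub_of_residue_ne hres
  exact v.disjoint_closedBall_of_lt_map_sub ((hρ_inv i).trans_le hsep)
    ((hρ_inv j).trans_le hsep)
end
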